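/- arXiv:0809.1586 — 3 statements merged into one kernel-verified Lean document; each statement's English description precedes it below -/
import Mathlib

section
/- Let m be a positive integer with m ≥ 2, 0 < d < 1, and Q_m(x) = Σ_{i=0}^m x^i. Then Q_m(x+d) has m−1 as its unique mode if and only if 0 < d < 1/C(m,2), where C(m,2) = m(m−1)/2. -/
open Finset

/-- The coefficients of `P(x+d)` where `P(x) = ∑_{i=0}^m a i * x^i`:
`b j = ∑_{i=j}^m a i * d^(i-j) * C(i,j)`. -/
noncomputable def shiftCoeff (a : ℕ → ℝ) (m : ℕ) (d : ℝ) (j : ℕ) : ℝ :=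
  ∑ i ∈ Finset.Icc j m, a i * d ^ (i - j) * (i.choose j : ℝ)

/-- `t` is a mode of the finite sequence `b 0, b 1, …, b m`, i.e.
`b 0 ≤ ⋯ ≤ b t ≥ ⋯ ≥ b m`. -/
def IsMode (b : ℕ → ℝ) (m t : ℕ) : Prop :=
  t ≤ m ∧ (∀ i, i < t → b i ≤ b (i + 1)) ∧ (∀ i, t ≤ i → i < m → b (i + 1) ≤ b i)

/-- `m̄(d) = ⌈(m - d)/(d + 1)⌉` (a nonnegative integer since `(m-d)/(d+1) > -1`). -/
noncomputable def mbar (m : ℕ) (d : ℝ) : ℕ := (⌈((m : ℝ) - d) / (d + 1)⌉).toNat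

/-- The coefficients of `Q_m(x+d)` where `Q_m(x) = ∑_{i=0}^m x^i`:
`d_j = ∑_{i=j}^m d^(i-j) * C(i,j)`. -/
noncomputable def qCoeff (m : ℕ) (d : ℝ) (j : ℕ) : ℝ :=
  ∑ i ∈ Finset.Icc j m, d ^ (i - j) * (i.choose j : ℝ)

lemma qCoeff_eq (m j : ℕ) (d : ℝ) :
    qCoeff m d j = ∑ k ∈ Finset.range (m + 1 - j), d ^ k * (((j + k).choose j : ℝ)) := by
  unfold qCoeff
  rw [show Finset.Icc j m = Finset.Ico j (m+1) by rw [Finset.Ico_add_one_right_eq_Icc],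
    Finset.sum_Ico_eq_sum_range]
  exact Finset.sum_congr rfl fun k _ => by rw [Nat.add_sub_cancel_left]

lemma two_mul_choose_two (m : ℕ) : 2 * m.choose 2 = m * (m - 1) := by
  rw [Nat.choose_two_right, Nat.mul_div_cancel']
  rcases Nat.eq_zero_or_pos m with h | h
  · simp [h]
  · obtain ⟨n, rfl⟩ := Nat.exists_eq_add_of_le h
    simpa [Nat.add_sub_cancel_left, mul_comm, Nat.add_comm] using
      (Nat.even_mul_succ_self n).two_dvd

lemma choose_ineq (j t : ℕ) :
    (j + t + 2).choose j ≤ (j + t + 2).choose 2 * (j + t + 1).choose (j + 1) := by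
  set m := j + t + 2 with hm
  have hA : m.choose j * (t + 2) = m * (j + t + 1).choose j := by
    have h1 : m * (j + t + 1).choose j = m.choose (j + 1) * (j + 1) := by
      simpa [hm, Nat.succ_eq_add_one] using Nat.add_one_mul_choose_eq (j + t + 1) j
    have h2 : m.choose (j + 1) * (j + 1) = m.choose j * (m - j) := Nat.choose_succ_right_eq m j
    have hmj : m - j = t + 2 := by omega
    rw [h1, h2, hmj]
  have hB : (j + t + 1).choose (j + 1) * (j + 1) = (j + t + 1).choose j * (t + 1) := by
    have := Nat.choose_succ_right_eq (j + t + 1) j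
    simpa [show j + t + 1 - j = t + 1 by omega] using this
  have key : m.choose j * ((t + 2) * ((j + 1) * 2)) ≤
      (m.choose 2 * (j + t + 1).choose (j + 1)) * ((t + 2) * ((j + 1) * 2)) := by
    have lhs : m.choose j * ((t + 2) * ((j + 1) * 2)) =
        m * (j + t + 1).choose j * ((j + 1) * 2) := by
      rw [← mul_assoc, hA]
    have rhs : (m.choose 2 * (j + t + 1).choose (j + 1)) * ((t + 2) * ((j + 1) * 2)) =
        (m * (m - 1)) * ((j + t + 1).choose j * (t + 1)) * (t + 2) := by
      rw [← two_mul_choose_two, ← hB]; ring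
    rw [lhs, rhs]
    have hm1 : m - 1 = j + t + 1 := by omega
    rw [hm1]
    have hfin : (j + 1) * 2 ≤ (j + t + 1) * (t + 1) * (t + 2) := by
      have h2 : 2 ≤ (t + 1) * (t + 2) := by nlinarith
      calc (j + 1) * 2 ≤ (j + t + 1) * ((t + 1) * (t + 2)) := Nat.mul_le_mul (by omega) h2
        _ = (j + t + 1) * (t + 1) * (t + 2) := by ring
    calc m * (j + t + 1).choose j * ((j + 1) * 2)
        ≤ m * (j + t + 1).choose j * ((j + t + 1) * (t + 1) * (t + 2)) :=
          Nat.mul_le_mul_left _ hfin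
      _ = m * (j + t + 1) * ((j + t + 1).choose j * (t + 1)) * (t + 2) := by ring
  have hpos : 0 < (t + 2) * ((j + 1) * 2) := by positivity
  exact Nat.le_of_mul_le_mul_right key hpos

lemma qCoeff_step (j t : ℕ) (d : ℝ) (hd0 : 0 < d)
    (hkey : d * ((j + t + 2).choose 2 : ℝ) < 1) :
    qCoeff (j + t + 2) d j ≤ qCoeff (j + t + 2) d (j + 1) := by
  set m := j + t + 2 with hm
  have h1 : m + 1 - j = (t + 2) + 1 := by omega
  have h2 : m + 1 - (j + 1) = t + 2 := by omega
  rw [qCoeff_eq, qCoeff_eq, h1, h2, Finset.sum_range_succ]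
  have pascal : ∀ k, ((j + 1 + k).choose (j + 1) : ℝ) =
      ((j + k).choose j : ℝ) + ((j + k).choose (j + 1) : ℝ) := by
    intro k
    have : (j + 1 + k) = (j + k) + 1 := by omega
    rw [this, Nat.choose_succ_succ]
    push_cast; ring
  have expand : ∑ k ∈ Finset.range (t + 2), d ^ k * (((j + 1 + k).choose (j + 1) : ℝ)) =
      (∑ k ∈ Finset.range (t + 2), d ^ k * (((j + k).choose j : ℝ))) +
      ∑ k ∈ Finset.range (t + 2), d ^ k * (((j + k).choose (j + 1) : ℝ)) := by
    rw [← Finset.sum_add_distrib]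
    exact Finset.sum_congr rfl fun k _ => by rw [pascal]; ring
  rw [expand]
  have hmain : d ^ (t + 2) * ((j + (t + 2)).choose j : ℝ) ≤
      ∑ k ∈ Finset.range (t + 2), d ^ k * (((j + k).choose (j + 1) : ℝ)) := by
    have single : d ^ (t + 1) * (((j + (t + 1)).choose (j + 1) : ℝ)) ≤
        ∑ k ∈ Finset.range (t + 2), d ^ k * (((j + k).choose (j + 1) : ℝ)) := by
      apply Finset.single_le_sum (f := fun k => d ^ k * (((j + k).choose (j + 1) : ℝ)))
      · intro k _; positivity
      · simp
    refine le_trans ?_ single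
    have hjt : j + (t + 2) = m := by omega
    have hjt1 : j + (t + 1) = j + t + 1 := by omega
    rw [hjt, hjt1, pow_succ, mul_comm (d ^ (t+1)) d, mul_assoc, mul_left_comm]
    apply mul_le_mul_of_nonneg_left _ (le_of_lt (pow_pos hd0 (t+1)))
    have hci : (m.choose j : ℝ) ≤ (m.choose 2 : ℝ) * ((j + t + 1).choose (j + 1) : ℝ) := by
      have := choose_ineq j t
      push_cast
      exact_mod_cast this
    calc d * (m.choose j : ℝ) ≤ d * ((m.choose 2 : ℝ) * ((j + t + 1).choose (j + 1) : ℝ)) :=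
          mul_le_mul_of_nonneg_left hci hd0.le
      _ = (d * (m.choose 2 : ℝ)) * ((j + t + 1).choose (j + 1) : ℝ) := by ring
      _ ≤ 1 * ((j + t + 1).choose (j + 1) : ℝ) := by
          apply mul_le_mul_of_nonneg_right hkey.le (by positivity)
      _ = ((j + t + 1).choose (j + 1) : ℝ) := one_mul _
  linarith

lemma qCoeff_top (n : ℕ) (d : ℝ) : qCoeff (n + 2) d (n + 2) = 1 := by
  rw [qCoeff_eq]
  simp

lemma qCoeff_top1 (n : ℕ) (d : ℝ) : qCoeff (n + 2) d (n + 1) = 1 + (n + 2) * d := by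
  rw [qCoeff_eq, show n + 2 + 1 - (n + 1) = 2 by omega]
  rw [Finset.sum_range_succ, Finset.sum_range_one]
  simp [Nat.choose_succ_self_right]
  ring

lemma qCoeff_top2 (n : ℕ) (d : ℝ) :
    qCoeff (n + 2) d n = 1 + (n + 1) * d + ((n + 2).choose 2 : ℝ) * d ^ 2 := by
  rw [qCoeff_eq, show n + 2 + 1 - n = 3 by omega]
  rw [Finset.sum_range_succ, Finset.sum_range_succ, Finset.sum_range_one]
  have hsymm : (n + 2).choose n = (n + 2).choose 2 := by
    rw [← Nat.choose_symm (by omega : 2 ≤ n + 2), show n + 2 - 2 = n by omega]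
  simp [Nat.choose_succ_self_right, hsymm]
  ring


/-- Proposition 3.6(ii).  Let `m ≥ 2` and `0 < d < 1`.  Then
`Q_m(x+d)` has `m−1` as its unique mode if and only if `0 < d < 1/C(m,2)`. -/
theorem stmt_15 (m : ℕ) (hm : 2 ≤ m) (d : ℝ) (hd0 : 0 < d) (hd1 : d < 1) :
    (∀ t, IsMode (qCoeff m d) m t ↔ t = m - 1) ↔ d < 1 / (m.choose 2 : ℝ) := by
  obtain ⟨n, rfl⟩ : ∃ n, m = n + 2 := ⟨m - 2, by omega⟩
  have hCpos : (0 : ℝ) < ((n + 2).choose 2 : ℝ) := by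
    exact_mod_cast Nat.choose_pos (by omega : 2 ≤ n + 2)
  have hiff : d < 1 / ((n + 2).choose 2 : ℝ) ↔ d * ((n + 2).choose 2 : ℝ) < 1 :=
    lt_div_iff₀ hCpos
  rw [hiff]
  constructor
  · intro h
    by_contra hge
    push_neg at hge
    obtain ⟨_, hinc, hdec⟩ := (h (n + 1)).mpr (by omega)
    have hnot : ¬ IsMode (qCoeff (n + 2) d) (n + 2) n := fun hmode => by
      have := (h n).mp hmode; omega
    apply hnot
    refine ⟨by omega, fun i hi => hinc i (by omega), fun i hni hi => ?_⟩
    have hcase : i = n ∨ i = n + 1 := by omega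
    rcases hcase with rfl | rfl
    · rw [qCoeff_top1, qCoeff_top2]
      nlinarith
    · rw [qCoeff_top, qCoeff_top1]
      nlinarith
  · intro hkey t
    constructor
    · rintro ⟨ht, hinc, hdec⟩
      by_contra hne
      rcases Nat.lt_or_ge t (n + 1) with hlt | hge
      · have := hdec n (by omega) (by omega)
        rw [qCoeff_top1, qCoeff_top2] at this
        nlinarith
      · have htm : t = n + 2 := by omega
        have := hinc (n + 1) (by omega)
        rw [qCoeff_top, qCoeff_top1] at this
        nlinarith
    · rintro rfl
      refine ⟨by omega, fun i hi => ?_, fun i hni hi => ?_⟩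
      · obtain ⟨s, hs⟩ : ∃ s, n + 2 = i + s + 2 := ⟨n - i, by omega⟩
        rw [hs]
        exact qCoeff_step i s d hd0 (by rw [← hs]; exact hkey)
      · have : i = n + 1 := by omega
        subst this
        rw [qCoeff_top, qCoeff_top1]
        nlinarith
end

section
/- Let m be a positive integer and P(x) a monic polynomial of degree m with nonnegative, non-decreasing coefficients, and let d > 0. Then M_*(Q_m, d) ≤ M_*(P, d) ≤ M^*(P, d) ≤ M^*(x^m, d), where Q_m(x) = Σ_{i=0}^m x^i. Moreover, if m̄ = ⌈(m−d)/(d+1)⌉ is a mode of Q_m(x+d), then m̄ is a mode of P(x+d); and if m̄ is the unique mode of Q_m(x+d), then m̄ is the unique mode of P(x+d) unless P(x) = x^m and (m+1)/(d+1) is a positive integer. -/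
open Finset

namespace Stmt17

noncomputable def wc (d : ℝ) (j i : ℕ) : ℝ :=
  d ^ (i - j) * (i.choose j : ℝ) - d ^ (i - j - 1) * (i.choose (j+1) : ℝ)

lemma wc_self (d : ℝ) (j : ℕ) : wc d j j = 1 := by
  simp [wc, Nat.choose_eq_zero_of_lt (Nat.lt_succ_self j)]

lemma wc_mul {d : ℝ} {j i : ℕ} (hij : j < i) :
    ((j:ℝ)+1) * wc d j i
      = d ^ (i - j - 1) * (i.choose j : ℝ) * (d * ((j:ℝ)+1) - ((i:ℝ) - j)) := by
  have h1 : (i.choose (j+1) * (j+1) : ℕ) = i.choose j * (i - j) := Nat.choose_succ_right_eq i j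
  have h1' : (i.choose (j+1) : ℝ) * ((j:ℝ)+1) = (i.choose j : ℝ) * ((i:ℝ) - j) := by
    have := congrArg (fun n : ℕ => (n:ℝ)) h1
    push_cast [Nat.cast_sub hij.le] at this
    exact_mod_cast this
  have h2 : d ^ (i - j) = d ^ (i - j - 1) * d := by
    rw [← pow_succ]; congr 1; omega
  unfold wc
  rw [h2]
  linear_combination (-(d ^ (i - j - 1))) * h1'

lemma wc_nonneg {d : ℝ} (hd : 0 < d) {j i : ℕ} (hji : j ≤ i)
    (h : (i:ℝ) ≤ j + d * ((j:ℝ)+1)) : 0 ≤ wc d j i := by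
  rcases eq_or_lt_of_le hji with rfl | hlt
  · rw [wc_self]; norm_num
  · have hc : (0:ℝ) < (i.choose j : ℝ) := by
      exact_mod_cast Nat.choose_pos hji
    have hp : (0:ℝ) < d ^ (i - j - 1) := pow_pos hd _
    have hm := wc_mul (d := d) hlt
    have hj1 : (0:ℝ) < (j:ℝ)+1 := by positivity
    have h0 : 0 ≤ ((j:ℝ)+1) * wc d j i := by
      rw [hm]; exact mul_nonneg (mul_nonneg hp.le hc.le) (by linarith)
    nlinarith [h0, hj1]

lemma wc_pos {d : ℝ} (hd : 0 < d) {j i : ℕ} (hji : j ≤ i)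
    (h : (i:ℝ) < j + d * ((j:ℝ)+1)) : 0 < wc d j i := by
  rcases eq_or_lt_of_le hji with rfl | hlt
  · rw [wc_self]; norm_num
  · have hc : (0:ℝ) < (i.choose j : ℝ) := by
      exact_mod_cast Nat.choose_pos hji
    have hp : (0:ℝ) < d ^ (i - j - 1) := pow_pos hd _
    have hm := wc_mul (d := d) hlt
    have hj1 : (0:ℝ) < (j:ℝ)+1 := by positivity
    have h0 : 0 < ((j:ℝ)+1) * wc d j i := by
      rw [hm]; exact mul_pos (mul_pos hp hc) (by linarith)
    nlinarith [h0, hj1]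

lemma wc_nonpos {d : ℝ} (hd : 0 < d) {j i : ℕ}
    (h : (j:ℝ) + d * ((j:ℝ)+1) ≤ i) : wc d j i ≤ 0 := by
  have hji : j < i := by
    have : (j:ℝ) < i := by nlinarith
    exact_mod_cast this
  have hc : (0:ℝ) < (i.choose j : ℝ) := by
    exact_mod_cast Nat.choose_pos hji.le
  have hp : (0:ℝ) < d ^ (i - j - 1) := pow_pos hd _
  have hm := wc_mul (d := d) hji
  have hj1 : (0:ℝ) < (j:ℝ)+1 := by positivity
  have h0 : ((j:ℝ)+1) * wc d j i ≤ 0 := by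
    rw [hm]; exact mul_nonpos_of_nonneg_of_nonpos (mul_nonneg hp.le hc.le) (by linarith)
  nlinarith [h0, hj1]

lemma wc_neg {d : ℝ} (hd : 0 < d) {j i : ℕ}
    (h : (j:ℝ) + d * ((j:ℝ)+1) < i) : wc d j i < 0 := by
  have hji : j < i := by
    have : (j:ℝ) < i := by nlinarith
    exact_mod_cast this
  have hc : (0:ℝ) < (i.choose j : ℝ) := by
    exact_mod_cast Nat.choose_pos hji.le
  have hp : (0:ℝ) < d ^ (i - j - 1) := pow_pos hd _
  have hm := wc_mul (d := d) hji
  have hj1 : (0:ℝ) < (j:ℝ)+1 := by positivity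
  have h0 : ((j:ℝ)+1) * wc d j i < 0 := by
    rw [hm]; exact mul_neg_of_pos_of_neg (mul_pos hp hc) (by linarith)
  nlinarith [h0, hj1]

lemma shift_of_gt (a : ℕ → ℝ) (m : ℕ) (d : ℝ) {j : ℕ} (h : m < j) :
    shiftCoeff a m d j = 0 := by
  unfold shiftCoeff
  rw [Finset.Icc_eq_empty (by omega)]
  simp

lemma shift_top (a : ℕ → ℝ) (m : ℕ) (d : ℝ) : shiftCoeff a m d m = a m := by
  unfold shiftCoeff
  rw [Finset.Icc_self]
  simp

lemma sum_Icc_succ_left (f : ℕ → ℝ) {j m : ℕ} (hjm : j ≤ m) :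
    ∑ i ∈ Icc j m, f i = f j + ∑ i ∈ Icc (j+1) m, f i := by
  rw [Finset.Icc_add_one_left_eq_Ioc, ← Finset.Ioc_insert_left hjm, Finset.sum_insert (by simp)]

lemma delta_eq (a : ℕ → ℝ) (m : ℕ) (d : ℝ) {j : ℕ} (hjm : j ≤ m) :
    shiftCoeff a m d j - shiftCoeff a m d (j+1) = ∑ i ∈ Icc j m, a i * wc d j i := by
  have h2 : shiftCoeff a m d (j+1) = ∑ i ∈ Icc j m, a i * (d ^ (i - j - 1) * (i.choose (j+1) : ℝ)) := by
    rw [sum_Icc_succ_left (f := fun i => a i * (d ^ (i - j - 1) * ((i.choose (j+1) : ℕ) : ℝ))) hjm]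
    have hz : ((j.choose (j+1) : ℕ) : ℝ) = 0 := by
      simp [Nat.choose_eq_zero_of_lt (Nat.lt_succ_self j)]
    unfold shiftCoeff
    rw [hz, mul_zero, mul_zero, zero_add]
    exact Finset.sum_congr rfl fun i hi => by
      have hsub : i - (j+1) = i - j - 1 := by omega
      rw [hsub]; ring
  rw [h2]
  unfold shiftCoeff wc
  rw [← Finset.sum_sub_distrib]
  exact Finset.sum_congr rfl fun i _ => by ring

/-- difference sequence of `a` -/
noncomputable def ee (a : ℕ → ℝ) : ℕ → ℝ
  | 0 => a 0
  | (k+1) => a (k+1) - a k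

lemma sum_ee (a : ℕ → ℝ) (n : ℕ) : ∑ k ∈ range (n+1), ee a k = a n := by
  induction n with
  | zero => simp [ee]
  | succ n ih => rw [Finset.sum_range_succ, ih]; simp [ee]

lemma ee_nonneg {a : ℕ → ℝ} (h0 : 0 ≤ a 0) (hmono : ∀ i, a i ≤ a (i+1)) (k : ℕ) :
    0 ≤ ee a k := by
  cases k with
  | zero => exact h0
  | succ k => simpa [ee] using hmono k

lemma abel_sum (a w : ℕ → ℝ) (m j : ℕ) (hjm : j ≤ m) :
    ∑ i ∈ Icc j m, a i * w i
      = ∑ k ∈ range (m+1), ee a k * ∑ i ∈ Icc (max j k) m, w i := by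
  have hfil : ∀ k, Icc (max j k) m = (Icc j m).filter (fun i => k ≤ i) := by
    intro k
    ext i
    simp only [mem_Icc, mem_filter]
    omega
  symm
  calc ∑ k ∈ range (m+1), ee a k * ∑ i ∈ Icc (max j k) m, w i
      = ∑ k ∈ range (m+1), ∑ i ∈ Icc j m, (if k ≤ i then ee a k * w i else 0) := by
        refine Finset.sum_congr rfl fun k _ => ?_
        rw [hfil k, Finset.mul_sum, Finset.sum_filter]
    _ = ∑ i ∈ Icc j m, ∑ k ∈ range (m+1), (if k ≤ i then ee a k * w i else 0) :=
        Finset.sum_comm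
    _ = ∑ i ∈ Icc j m, a i * w i := by
        refine Finset.sum_congr rfl fun i hi => ?_
        have him : i ≤ m := (mem_Icc.mp hi).2
        have hsub : range (i+1) ⊆ range (m+1) := by
          intro x hx; simp only [mem_range] at *; omega
        rw [← Finset.sum_subset hsub (fun x _ hx => by
          rw [if_neg]; simp only [mem_range] at hx; omega)]
        have : ∀ k ∈ range (i+1), (if k ≤ i then ee a k * w i else 0) = ee a k * w i := by
          intro k hk; rw [if_pos]; simp only [mem_range] at hk; omega
        rw [Finset.sum_congr rfl this, ← Finset.sum_mul, sum_ee]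

lemma tails_nonpos {d : ℝ} (hd : 0 < d) {m j : ℕ}
    (hT : ∑ i ∈ Icc j m, wc d j i ≤ 0) :
    ∀ s, j ≤ s → s ≤ m → ∑ i ∈ Icc s m, wc d j i ≤ 0 := by
  intro s hjs hsm
  by_cases hc : (s:ℝ) ≤ (j:ℝ) + d * ((j:ℝ)+1)
  · have hsplit : (∑ i ∈ Ico j s, wc d j i) + ∑ i ∈ Icc s m, wc d j i
        = ∑ i ∈ Icc j m, wc d j i := by
      rw [show Icc s m = Ico s (m+1) from (Finset.Ico_add_one_right_eq_Icc s m).symm,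
          show Icc j m = Ico j (m+1) from (Finset.Ico_add_one_right_eq_Icc j m).symm]
      exact Finset.sum_Ico_consecutive _ hjs (by omega)
    have hpos : 0 ≤ ∑ i ∈ Ico j s, wc d j i := by
      refine Finset.sum_nonneg fun i hi => ?_
      rw [mem_Ico] at hi
      refine wc_nonneg hd hi.1 ?_
      have : (i:ℝ) < s := by exact_mod_cast hi.2
      linarith
    linarith
  · push_neg at hc
    refine Finset.sum_nonpos fun i hi => ?_
    rw [mem_Icc] at hi
    refine wc_nonpos hd ?_
    have : (s:ℝ) ≤ i := by exact_mod_cast hi.1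
    linarith

lemma tails_neg {d : ℝ} (hd : 0 < d) {m j : ℕ}
    (hT : ∑ i ∈ Icc j m, wc d j i < 0) :
    ∀ s, j ≤ s → s ≤ m → ∑ i ∈ Icc s m, wc d j i < 0 := by
  intro s hjs hsm
  by_cases hc : (s:ℝ) ≤ (j:ℝ) + d * ((j:ℝ)+1)
  · have hsplit : (∑ i ∈ Ico j s, wc d j i) + ∑ i ∈ Icc s m, wc d j i
        = ∑ i ∈ Icc j m, wc d j i := by
      rw [show Icc s m = Ico s (m+1) from (Finset.Ico_add_one_right_eq_Icc s m).symm,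
          show Icc j m = Ico j (m+1) from (Finset.Ico_add_one_right_eq_Icc j m).symm]
      exact Finset.sum_Ico_consecutive _ hjs (by omega)
    have hpos : 0 ≤ ∑ i ∈ Ico j s, wc d j i := by
      refine Finset.sum_nonneg fun i hi => ?_
      rw [mem_Ico] at hi
      refine wc_nonneg hd hi.1 ?_
      have : (i:ℝ) < s := by exact_mod_cast hi.2
      linarith
    linarith
  · push_neg at hc
    have hne : (Icc s m).Nonempty := Finset.nonempty_Icc.mpr hsm
    have := Finset.sum_lt_sum_of_nonempty (f := fun i => wc d j i) (g := fun _ => (0:ℝ)) hne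
      (fun i hi => by
        rw [mem_Icc] at hi
        refine wc_neg hd (j := j) (i := i) ?_
        have : (s:ℝ) ≤ i := by exact_mod_cast hi.1
        linarith)
    simpa using this

/-- Lemma 1: in the region `m ≤ j + d(j+1)` the shifted coefficients decrease. -/
lemma L1 {d : ℝ} (hd : 0 < d) (a : ℕ → ℝ) (h0 : ∀ i, 0 ≤ a i) {m j : ℕ}
    (hjm : j ≤ m) (h : (m:ℝ) ≤ (j:ℝ) + d * ((j:ℝ)+1)) :
    0 ≤ shiftCoeff a m d j - shiftCoeff a m d (j+1) := by
  rw [delta_eq a m d hjm]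
  refine Finset.sum_nonneg fun i hi => ?_
  rw [mem_Icc] at hi
  refine mul_nonneg (h0 i) (wc_nonneg hd hi.1 ?_)
  have : (i:ℝ) ≤ m := by exact_mod_cast hi.2
  linarith

lemma L1' {d : ℝ} (hd : 0 < d) (a : ℕ → ℝ) {m j : ℕ} (h0 : ∀ i, 0 ≤ a i) (ham : a m = 1)
    (hjm : j ≤ m) (h : (m:ℝ) < (j:ℝ) + d * ((j:ℝ)+1)) :
    0 < shiftCoeff a m d j - shiftCoeff a m d (j+1) := by
  rw [delta_eq a m d hjm]
  have := Finset.sum_lt_sum (s := Icc j m) (f := fun _ => (0:ℝ))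
    (g := fun i => a i * wc d j i)
    (fun i hi => by
      rw [mem_Icc] at hi
      refine mul_nonneg (h0 i) (wc_nonneg hd hi.1 ?_)
      have : (i:ℝ) ≤ m := by exact_mod_cast hi.2
      linarith)
    ⟨m, mem_Icc.mpr ⟨hjm, le_refl m⟩, by
      show (0:ℝ) < a m * wc d j m
      rw [ham, one_mul]
      exact wc_pos hd hjm h⟩
  simpa using this

/-- Lemma 2 (non-strict): if `Q`'s coefficients increase at `j`, so do `P`'s. -/
lemma L2 {d : ℝ} (hd : 0 < d) (a : ℕ → ℝ) (h0 : 0 ≤ a 0) (hmono : ∀ i, a i ≤ a (i+1))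
    {m j : ℕ} (hjm : j ≤ m) (hq : ∑ i ∈ Icc j m, wc d j i ≤ 0) :
    shiftCoeff a m d j - shiftCoeff a m d (j+1) ≤ 0 := by
  rw [delta_eq a m d hjm, abel_sum a (wc d j) m j hjm]
  refine Finset.sum_nonpos fun k hk => ?_
  rw [mem_range] at hk
  refine mul_nonpos_of_nonneg_of_nonpos (ee_nonneg h0 hmono k) ?_
  exact tails_nonpos hd hq (max j k) (le_max_left _ _) (by omega)

/-- Lemma 2' (strict). -/
lemma L2' {d : ℝ} (hd : 0 < d) (a : ℕ → ℝ) {m j : ℕ} (h0 : 0 ≤ a 0) (hmono : ∀ i, a i ≤ a (i+1))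
    (ham : a m = 1) (hjm : j ≤ m) (hq : ∑ i ∈ Icc j m, wc d j i < 0) :
    shiftCoeff a m d j - shiftCoeff a m d (j+1) < 0 := by
  rw [delta_eq a m d hjm, abel_sum a (wc d j) m j hjm]
  have htail : ∀ k ∈ range (m+1), ∑ i ∈ Icc (max j k) m, wc d j i < 0 := by
    intro k hk
    rw [mem_range] at hk
    exact tails_neg hd hq (max j k) (le_max_left _ _) (by omega)
  have hex : ∃ k ∈ range (m+1), 0 < ee a k := by
    by_contra hcon
    push_neg at hcon
    have hall : ∀ k ∈ range (m+1), ee a k = 0 := fun k hk =>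
      le_antisymm (hcon k hk) (ee_nonneg h0 hmono k)
    have := sum_ee a m
    rw [Finset.sum_eq_zero hall] at this
    rw [ham] at this
    norm_num at this
  obtain ⟨k0, hk0, hk0pos⟩ := hex
  have := Finset.sum_lt_sum (s := range (m+1))
    (f := fun k => ee a k * ∑ i ∈ Icc (max j k) m, wc d j i)
    (g := fun _ => (0:ℝ))
    (fun k hk => mul_nonpos_of_nonneg_of_nonpos (ee_nonneg h0 hmono k) (htail k hk).le)
    ⟨k0, hk0, mul_neg_of_pos_of_neg hk0pos (htail k0 hk0)⟩
  simpa using this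

lemma sum_Icc_shift (f : ℕ → ℝ) (j m : ℕ) :
    ∑ i ∈ Icc (j+1) (m+1), f i = ∑ i ∈ Icc j m, f (i+1) := by
  rw [← Finset.map_add_right_Icc j m 1, Finset.sum_map]
  rfl

lemma shift_succ_eq (a : ℕ → ℝ) (m : ℕ) (d : ℝ) (j : ℕ) :
    shiftCoeff a (m+1) d (j+1)
      = shiftCoeff (fun i => a (i+1)) m d j + d * shiftCoeff (fun i => a (i+1)) m d (j+1) := by
  unfold shiftCoeff
  rw [sum_Icc_shift (fun i => a i * d ^ (i - (j+1)) * (i.choose (j+1) : ℝ)) j (m)]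
  have hterm : ∀ i ∈ Icc j m,
      a (i+1) * d ^ (i+1 - (j+1)) * ((i+1).choose (j+1) : ℝ)
        = a (i+1) * d ^ (i - j) * (i.choose j : ℝ)
          + a (i+1) * (d ^ (i - j) * (i.choose (j+1) : ℝ)) := by
    intro i _
    have h1 : i + 1 - (j+1) = i - j := by omega
    have h2 : ((i+1).choose (j+1) : ℝ) = (i.choose j : ℝ) + (i.choose (j+1) : ℝ) := by
      rw [Nat.choose_succ_succ]; push_cast; ring
    rw [h1, h2]; ring
  rw [Finset.sum_congr rfl hterm, Finset.sum_add_distrib]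
  congr 1
  -- second piece
  rw [Finset.mul_sum]
  by_cases hjm : j ≤ m
  · rw [sum_Icc_succ_left (f := fun i => a (i+1) * (d ^ (i - j) * ((i.choose (j+1) : ℕ) : ℝ))) hjm]
    have hz : ((j.choose (j+1) : ℕ) : ℝ) = 0 := by
      simp [Nat.choose_eq_zero_of_lt (Nat.lt_succ_self j)]
    rw [hz, mul_zero, mul_zero, zero_add]
    refine Finset.sum_congr rfl fun i hi => ?_
    rw [mem_Icc] at hi
    have h3 : d ^ (i - j) = d * d ^ (i - (j+1)) := by
      rw [← pow_succ']; congr 1; omega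
    rw [h3]; ring
  · rw [Finset.Icc_eq_empty (by omega), Finset.Icc_eq_empty (by omega)]
    simp

lemma shift_zero_eq (a : ℕ → ℝ) (m : ℕ) (d : ℝ) :
    shiftCoeff a (m+1) d 0 = a 0 + d * shiftCoeff (fun i => a (i+1)) m d 0 := by
  unfold shiftCoeff
  rw [sum_Icc_succ_left (f := fun i => a i * d ^ (i - 0) * ((i.choose 0 : ℕ) : ℝ)) (by omega)]
  rw [sum_Icc_shift (fun i => a i * d ^ (i - 0) * (i.choose 0 : ℝ)) 0 m]
  simp only [Nat.sub_zero, Nat.choose_zero_right, Nat.cast_one, mul_one, pow_zero]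
  rw [Finset.mul_sum]
  congr 1
  refine Finset.sum_congr rfl fun i _ => ?_
  rw [pow_succ']
  ring

/-- The key propagation lemma: once the shifted coefficient sequence starts to
decrease, it keeps decreasing. -/
lemma prop_lemma {d : ℝ} (hd : 0 < d) :
    ∀ (m : ℕ) (a : ℕ → ℝ), (∀ i, 0 ≤ a i) → (∀ i, a i ≤ a (i+1)) →
    ∀ j, 0 ≤ shiftCoeff a m d j - shiftCoeff a m d (j+1) →
      0 ≤ shiftCoeff a m d (j+1) - shiftCoeff a m d (j+2) := by
  intro m
  induction m with
  | zero =>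
    intro a h0 hmono j hΔ
    rw [shift_of_gt a 0 d (by omega), shift_of_gt a 0 d (by omega)]
    simp
  | succ m ih =>
    intro a h0 hmono j hΔ
    have h0' : ∀ i, 0 ≤ a (i+1) := fun i => h0 (i+1)
    have hmono' : ∀ i, a (i+1) ≤ a (i+1+1) := fun i => hmono (i+1)
    set r : ℕ → ℝ := shiftCoeff (fun i => a (i+1)) m d with hr
    have hs : ∀ k, shiftCoeff a (m+1) d (k+1) = r k + d * r (k+1) :=
      fun k => shift_succ_eq a m d k
    have IH : ∀ k, 0 ≤ r k - r (k+1) → 0 ≤ r (k+1) - r (k+2) :=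
      fun k => ih (fun i => a (i+1)) h0' hmono' k
    cases j with
    | zero =>
      rw [shift_zero_eq a m d, hs 0] at hΔ
      rw [hs 0, hs 1]
      have hr0 : a 0 ≤ r 0 := by
        have h01 : a 0 ≤ a 1 := hmono 0
        have : a 1 ≤ r 0 := by
          rw [hr]
          unfold shiftCoeff
          have hmem : 0 ∈ Icc 0 m := by simp
          have hb := Finset.single_le_sum
            (f := fun i => a (i+1) * d ^ (i - 0) * ((i.choose 0 : ℕ) : ℝ))
            (fun i _ => by
              have h1 : (0:ℝ) ≤ (i.choose 0 : ℝ) := by positivity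
              have hp : (0:ℝ) ≤ d ^ (i - 0) := by positivity
              have h2 := h0 (i+1)
              positivity)
            hmem
          simpa using hb
        linarith
      have h1 : 0 ≤ r 0 - r 1 := by nlinarith
      have h2 := IH 0 h1
      nlinarith
    | succ j' =>
      rw [hs j', hs (j'+1)] at hΔ
      rw [hs (j'+1), hs (j'+2)]
      by_cases hc : 0 ≤ r (j'+1) - r (j'+2)
      · have h2 := IH (j'+1) hc
        nlinarith
      · push_neg at hc
        by_cases hc' : 0 ≤ r j' - r (j'+1)
        · have := IH j' hc'
          linarith
        · push_neg at hc'
          nlinarith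

/-- Mode constructor from the propagation property. -/
lemma mode_of (B : ℕ → ℝ) (m : ℕ)
    (hprop : ∀ j, 0 ≤ B j - B (j+1) → 0 ≤ B (j+1) - B (j+2))
    (hm : 0 ≤ B m - B (m+1)) :
    IsMode B m (sInf {j | 0 ≤ B j - B (j+1)}) := by
  set S : Set ℕ := {j | 0 ≤ B j - B (j+1)} with hS
  have hmS : m ∈ S := hm
  have hne : S.Nonempty := ⟨m, hmS⟩
  have htS : sInf S ∈ S := Nat.sInf_mem hne
  have hle : sInf S ≤ m := Nat.sInf_le hmS
  refine ⟨hle, ?_, ?_⟩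
  · intro i hi
    have hni : i ∉ S := Nat.notMem_of_lt_sInf hi
    have : ¬ (0 ≤ B i - B (i+1)) := hni
    linarith [not_le.mp this]
  · intro i hti _
    have key : ∀ k, sInf S ≤ k → 0 ≤ B k - B (k+1) := by
      intro k hk
      induction k, hk using Nat.le_induction with
      | base => exact htS
      | succ n _ ihn => exact hprop n ihn
    linarith [key i hti]

end Stmt17

open Stmt17

/-- Theorem 4.1.  Let `P ∈ 𝐏^m_↑` and `d > 0`.  Then
`M_*(Q_m,d) ≤ M_*(P,d) ≤ M^*(P,d) ≤ M^*(x^m,d)`.  Moreover, if `m̄` is a mode of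
`Q_m(x+d)` then it is a mode of `P(x+d)`; and if `m̄` is the unique mode of
`Q_m(x+d)`, then it is the unique mode of `P(x+d)` unless `P(x) = x^m` and
`(m+1)/(d+1)` is a positive integer. -/
theorem stmt_17 (m : ℕ) (hm : 0 < m) (d : ℝ) (hd : 0 < d) (a : ℕ → ℝ)
    (ha0 : 0 ≤ a 0) (hmono : ∀ i, i < m → a i ≤ a (i + 1)) (hmonic : a m = 1) :
    sInf {t | IsMode (qCoeff m d) m t} ≤ sInf {t | IsMode (shiftCoeff a m d) m t} ∧
    sInf {t | IsMode (shiftCoeff a m d) m t} ≤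
      sSup {t | IsMode (shiftCoeff a m d) m t} ∧
    sSup {t | IsMode (shiftCoeff a m d) m t} ≤
      sSup {t | IsMode (shiftCoeff (fun i => if i = m then 1 else 0) m d) m t} ∧
    (IsMode (qCoeff m d) m (mbar m d) → IsMode (shiftCoeff a m d) m (mbar m d)) ∧
    ((∀ t, IsMode (qCoeff m d) m t ↔ t = mbar m d) →
      ¬ ((∀ i, i < m → a i = 0) ∧ ∃ k : ℕ, 0 < k ∧ (k : ℝ) * (d + 1) = (m : ℝ) + 1) →
      ∀ t, IsMode (shiftCoeff a m d) m t ↔ t = mbar m d) := by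
  classical
  have hd1 : (0:ℝ) < d + 1 := by linarith
  set θ : ℝ := ((m:ℝ) - d) / (d + 1) with hθ
  have hθle : ∀ j : ℕ, θ ≤ (j:ℝ) ↔ (m:ℝ) ≤ (j:ℝ) + d * ((j:ℝ)+1) := by
    intro j
    rw [hθ, div_le_iff₀ hd1]
    constructor <;> intro h <;> nlinarith
  have hθlt : ∀ j : ℕ, θ < (j:ℝ) ↔ (m:ℝ) < (j:ℝ) + d * ((j:ℝ)+1) := by
    intro j
    rw [hθ, div_lt_iff₀ hd1]
    constructor <;> intro h <;> nlinarith
  have hθle' : ∀ j : ℕ, (j:ℝ) ≤ θ ↔ (j:ℝ) + d * ((j:ℝ)+1) ≤ (m:ℝ) := by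
    intro j
    rw [hθ, le_div_iff₀ hd1]
    constructor <;> intro h <;> nlinarith
  -- the monotonized coefficient sequence
  set a' : ℕ → ℝ := fun i => a (min i m) with ha'
  have hanm : ∀ k, k ≤ m → 0 ≤ a k := by
    intro k
    induction k with
    | zero => intro _; exact ha0
    | succ k ihk => intro hk; exact le_trans (ihk (by omega)) (hmono k (by omega))
  have ha'0 : ∀ i, 0 ≤ a' i := fun i => hanm _ (min_le_right i m)
  have ha'mono : ∀ i, a' i ≤ a' (i+1) := by
    intro i
    rcases lt_or_ge i m with h | h
    · have h1 : min i m = i := by omega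
      have h2 : min (i+1) m = i+1 := by omega
      rw [ha']
      simp only [h1, h2]
      exact hmono i h
    · have h1 : min i m = m := by omega
      have h2 : min (i+1) m = m := by omega
      rw [ha']
      simp only [h1, h2]
      exact le_refl _
  have ha'Mono : Monotone a' := monotone_nat_of_le_succ ha'mono
  have ha'm : a' m = 1 := by rw [ha']; simp [hmonic]
  have ha'eq : ∀ i, i ≤ m → a' i = a i := by
    intro i h
    rw [ha']
    simp [min_eq_left h]
  have hba : shiftCoeff a m d = shiftCoeff a' m d := by
    funext j
    unfold shiftCoeff
    refine Finset.sum_congr rfl fun i hi => ?_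
    rw [mem_Icc] at hi
    rw [ha'eq i hi.2]
  have hq1 : qCoeff m d = shiftCoeff (fun _ => (1:ℝ)) m d := by
    funext j
    unfold qCoeff shiftCoeff
    exact Finset.sum_congr rfl fun i _ => by ring
  rw [hba, hq1]
  set b : ℕ → ℝ := shiftCoeff a' m d with hb
  set q : ℕ → ℝ := shiftCoeff (fun _ => (1:ℝ)) m d with hqd
  set c : ℕ → ℝ := shiftCoeff (fun i => if i = m then (1:ℝ) else 0) m d with hc
  -- top differences
  have hbtop : 0 ≤ b m - b (m+1) := by
    rw [hb, shift_top, shift_of_gt a' m d (by omega), ha'm]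
    norm_num
  have hqtop : 0 ≤ q m - q (m+1) := by
    rw [hqd, shift_top, shift_of_gt _ m d (by omega)]
    norm_num
  have propb : ∀ j, 0 ≤ b j - b (j+1) → 0 ≤ b (j+1) - b (j+2) := by
    intro j h
    have := prop_lemma hd m a' ha'0 ha'mono j (by rw [hb] at h; exact h)
    rw [← hb] at this
    exact this
  have propq : ∀ j, 0 ≤ q j - q (j+1) → 0 ≤ q (j+1) - q (j+2) := by
    intro j h
    have := prop_lemma hd m (fun _ => (1:ℝ)) (fun _ => by norm_num) (fun _ => le_refl 1) j
      (by rw [hqd] at h; exact h)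
    rw [← hqd] at this
    exact this
  have modeb : IsMode b m (sInf {j | 0 ≤ b j - b (j+1)}) := mode_of b m propb hbtop
  have modeq : IsMode q m (sInf {j | 0 ≤ q j - q (j+1)}) := mode_of q m propq hqtop
  have hSbne : Set.Nonempty {t | IsMode b m t} := ⟨_, modeb⟩
  have hbddb : BddAbove {t | IsMode b m t} := ⟨m, fun t ht => ht.1⟩
  have hbddc : BddAbove {t | IsMode c m t} := ⟨m, fun t ht => ht.1⟩
  have hqdiff : ∀ j, j ≤ m → q j - q (j+1) = ∑ i ∈ Icc j m, wc d j i := by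
    intro j hj
    rw [hqd, delta_eq _ m d hj]
    exact Finset.sum_congr rfl fun i _ => one_mul _
  have hcdiff : ∀ j, j ≤ m → c j - c (j+1) = wc d j m := by
    intro j hj
    rw [hc, delta_eq _ m d hj]
    rw [Finset.sum_eq_single m (fun i _ hne => by simp [hne])
      (fun hno => absurd (mem_Icc.mpr ⟨hj, le_refl m⟩) hno)]
    simp
  -- mbar facts
  have hmbar_def : mbar m d = (⌈θ⌉).toNat := by rw [mbar, hθ]
  have hθmbar : θ ≤ (mbar m d : ℝ) := by
    rw [hmbar_def]
    rcases le_or_gt 0 ⌈θ⌉ with hp | hn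
    · have h1 : ((⌈θ⌉.toNat : ℕ) : ℝ) = ((⌈θ⌉ : ℤ) : ℝ) := by
        exact_mod_cast congrArg (fun z : ℤ => (z : ℝ)) (Int.toNat_of_nonneg hp)
      rw [h1]
      exact Int.le_ceil θ
    · have h1 : θ ≤ ((⌈θ⌉:ℤ):ℝ) := Int.le_ceil θ
      have h2 : ((⌈θ⌉:ℤ):ℝ) < 0 := by exact_mod_cast hn
      have h3 : (0:ℝ) ≤ ((⌈θ⌉.toNat : ℕ) : ℝ) := by positivity
      linarith
  -- Part 4 as a reusable fact
  have hpart4 : IsMode q m (mbar m d) → IsMode b m (mbar m d) := by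
    intro hQm
    have hm'm : mbar m d ≤ m := hQm.1
    refine ⟨hm'm, ?_, ?_⟩
    · intro i hi
      have him : i ≤ m := by omega
      have hqi := hQm.2.1 i hi
      have hq0 : ∑ i' ∈ Icc i m, wc d i i' ≤ 0 := by
        rw [← hqdiff i him]; linarith
      have := L2 hd a' (ha'0 0) ha'mono him hq0
      rw [← hb] at this
      linarith
    · intro i hi him
      have hθi : θ ≤ (i:ℝ) := le_trans hθmbar (by exact_mod_cast Nat.cast_le.mpr hi)
      have := L1 hd a' ha'0 (le_of_lt him) ((hθle i).mp hθi)
      rw [← hb] at this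
      linarith
  refine ⟨?_, ?_, ?_, hpart4, ?_⟩
  · -- Part 1
    have htb := Nat.sInf_mem hSbne
    set tb := sInf {t | IsMode b m t} with htbdef
    have htbm : tb ≤ m := htb.1
    have htq_le : sInf {j | 0 ≤ q j - q (j+1)} ≤ tb := by
      rcases eq_or_lt_of_le htbm with heq | hlt
      · rw [heq]; exact Nat.sInf_le hqtop
      · apply Nat.sInf_le
        show 0 ≤ q tb - q (tb+1)
        by_contra hcon
        push_neg at hcon
        have hq0 : ∑ i ∈ Icc tb m, wc d tb i < 0 := by
          rw [← hqdiff tb htbm]; linarith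
        have hlt2 := L2' hd a' (ha'0 0) ha'mono ha'm htbm hq0
        rw [← hb] at hlt2
        have hdec := htb.2.2 tb (le_refl tb) hlt
        linarith
    exact le_trans (Nat.sInf_le modeq) htq_le
  · -- Part 2
    exact le_csSup hbddb (Nat.sInf_mem hSbne)
  · -- Part 3
    set K : ℕ := min ((⌊θ⌋ + 1).toNat) m with hK
    have hKmode : IsMode c m K := by
      refine ⟨min_le_right _ _, ?_, ?_⟩
      · intro i hi
        have him : i < m := lt_of_lt_of_le hi (min_le_right _ _)
        have hiθ : (i:ℝ) ≤ θ := by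
          have h1 : i < (⌊θ⌋ + 1).toNat := lt_of_lt_of_le hi (min_le_left _ _)
          have h2 : (i:ℤ) < ⌊θ⌋ + 1 := Int.lt_toNat.mp h1
          have h3 : (i:ℤ) ≤ ⌊θ⌋ := by omega
          exact_mod_cast Int.le_floor.mp h3
        have hw : wc d i m ≤ 0 := wc_nonpos hd ((hθle' i).mp hiθ)
        have hce := hcdiff i him.le
        linarith
      · intro i hKi him
        have hθi : θ < (i:ℝ) := by
          rcases le_or_gt ((⌊θ⌋ + 1).toNat) m with hxm | hxm
          · have hxi : (⌊θ⌋ + 1).toNat ≤ i := le_trans (by rw [hK] at hKi; omega) (le_refl i)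
            have hx1 : ((⌊θ⌋ + 1).toNat : ℤ) ≤ (i:ℤ) := by exact_mod_cast hxi
            have hx2 : ⌊θ⌋ + 1 ≤ ((⌊θ⌋ + 1).toNat : ℤ) := Int.self_le_toNat _
            have hx3 : ((⌊θ⌋:ℤ):ℝ) + 1 ≤ (i:ℝ) := by exact_mod_cast le_trans hx2 hx1
            linarith [Int.lt_floor_add_one θ]
          · exfalso
            have : K = m := by rw [hK]; omega
            omega
        have hw : 0 ≤ wc d i m := wc_nonneg hd him.le (((hθlt i).mp hθi)).le
        have hce := hcdiff i him.le
        linarith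
    have hub : ∀ t ∈ {t | IsMode b m t}, t ≤ K := by
      intro t ht
      have htm : t ≤ m := ht.1
      have hKt1 : t ≤ (⌊θ⌋ + 1).toNat := by
        rcases Nat.eq_zero_or_pos t with rfl | htpos
        · exact Nat.zero_le _
        · have hstep : b (t-1) ≤ b t := by
            have h := ht.2.1 (t-1) (by omega)
            have h2 : t - 1 + 1 = t := by omega
            rw [h2] at h
            exact h
          have hnotlt : ¬ (θ < ((t-1:ℕ):ℝ)) := by
            intro hcon
            have hstrict := L1' hd a' ha'0 ha'm (show t-1 ≤ m by omega)
              ((hθlt (t-1)).mp hcon)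
            rw [← hb] at hstrict
            have h2 : t - 1 + 1 = t := by omega
            rw [h2] at hstrict
            linarith
          push_neg at hnotlt
          have h4 : ((t-1:ℕ):ℤ) ≤ ⌊θ⌋ := Int.le_floor.mpr (by exact_mod_cast hnotlt)
          have h5 : (t:ℤ) ≤ ⌊θ⌋ + 1 := by
            have h6 : ((t-1:ℕ):ℤ) = (t:ℤ) - 1 := by
              have : (1:ℕ) ≤ t := htpos
              push_cast [Nat.cast_sub this]
              ring
            omega
          have h6 : (0:ℤ) ≤ ⌊θ⌋ + 1 := le_trans (by positivity) h5
          exact (Int.le_toNat h6).mpr h5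
      exact le_min hKt1 htm
    exact le_trans (csSup_le hSbne hub) (le_csSup hbddc hKmode)
  · -- Part 5
    intro hU hE t
    have hQmode : IsMode q m (mbar m d) := (hU (mbar m d)).mpr rfl
    have hbmode : IsMode b m (mbar m d) := hpart4 hQmode
    constructor
    · intro hmode
      by_contra hne
      rcases lt_or_gt_of_ne hne with hlt | hgt
      · -- t < mbar
        have hm'm : mbar m d ≤ m := hQmode.1
        have htm : t < m := lt_of_lt_of_le hlt hm'm
        have hqstrict : q t - q (t+1) < 0 := by
          by_contra hcon
          push_neg at hcon
          have hinfle : sInf {j | 0 ≤ q j - q (j+1)} ≤ t := Nat.sInf_le hcon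
          have := (hU _).mp modeq
          omega
        have hq0 : ∑ i ∈ Icc t m, wc d t i < 0 := by
          rw [← hqdiff t htm.le]; linarith
        have hlt2 := L2' hd a' (ha'0 0) ha'mono ha'm htm.le hq0
        rw [← hb] at hlt2
        have hd2 := hmode.2.2 t (le_refl t) htm
        linarith
      · -- t > mbar
        have htm : t ≤ m := hmode.1
        have hm'lt : mbar m d < m := lt_of_lt_of_le hgt htm
        have hinc := hmode.2.1 (mbar m d) hgt
        have hmle : (m:ℝ) ≤ (mbar m d : ℝ) + d * ((mbar m d : ℝ)+1) :=
          (hθle (mbar m d)).mp hθmbar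
        have hdelta : b (mbar m d) - b (mbar m d + 1)
            = ∑ i ∈ Icc (mbar m d) m, a' i * wc d (mbar m d) i := by
          rw [hb]; exact delta_eq a' m d hm'lt.le
        have hterms : ∀ i ∈ Icc (mbar m d) m, (0:ℝ) ≤ a' i * wc d (mbar m d) i := by
          intro i hi
          rw [mem_Icc] at hi
          refine mul_nonneg (ha'0 i) (wc_nonneg hd hi.1 ?_)
          have : (i:ℝ) ≤ m := by exact_mod_cast hi.2
          linarith
        have hstrict : 0 < b (mbar m d) - b (mbar m d + 1) := by
          rcases not_and_or.mp hE with hA | hB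
          · push_neg at hA
            obtain ⟨i0, hi0m, hi0⟩ := hA
            have hp1 : 0 < a' (m-1) := by
              have h1 : 0 < a i0 := lt_of_le_of_ne (hanm i0 hi0m.le) (Ne.symm hi0)
              have h2 : a' i0 = a i0 := ha'eq i0 hi0m.le
              have h3 : a' i0 ≤ a' (m-1) := ha'Mono (by omega)
              linarith
            have hwpos : 0 < wc d (mbar m d) (m-1) := by
              refine wc_pos hd (by omega) ?_
              have hcast : ((m-1:ℕ):ℝ) = (m:ℝ) - 1 := by
                have h1 : (1:ℕ) ≤ m := hm
                push_cast [Nat.cast_sub h1]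
                ring
              rw [hcast]
              linarith
            have := Finset.sum_lt_sum (s := Icc (mbar m d) m)
              (f := fun _ => (0:ℝ)) (g := fun i => a' i * wc d (mbar m d) i)
              hterms
              ⟨m-1, mem_Icc.mpr ⟨by omega, by omega⟩, by
                show (0:ℝ) < a' (m-1) * wc d (mbar m d) (m-1)
                exact mul_pos hp1 hwpos⟩
            rw [hdelta]
            simpa using this
          · have hwpos : 0 < wc d (mbar m d) m := by
              rcases eq_or_lt_of_le hmle with heq | hltm
              · exfalso
                apply hB
                refine ⟨mbar m d + 1, by omega, ?_⟩
                push_cast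
                nlinarith [heq]
              · exact wc_pos hd hm'lt.le hltm
            have := Finset.sum_lt_sum (s := Icc (mbar m d) m)
              (f := fun _ => (0:ℝ)) (g := fun i => a' i * wc d (mbar m d) i)
              hterms
              ⟨m, mem_Icc.mpr ⟨by omega, le_refl m⟩, by
                show (0:ℝ) < a' m * wc d (mbar m d) m
                rw [ha'm, one_mul]
                exact hwpos⟩
            rw [hdelta]
            simpa using this
        linarith
    · intro h
      rw [h]
      exact hbmode
end

section
/- Let m be a positive integer, let d be a real number with 0 < d < 1, and let P(x) be a monic polynomial of degree m with nonnegative, non-decreasing coefficients such that P(x) ≠ x^m. Then every mode t of P(x+d) satisfies ⌊m/2⌋ ≤ t ≤ m̄, where m̄ = ⌈(m−d)/(d+1)⌉; i.e., ⌊m/2⌋ ≤ M_*(P,d) ≤ M^*(P,d) ≤ m̄. -/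
open Finset

namespace Stmt19

noncomputable def vterm (d : ℝ) (j i : ℕ) : ℝ :=
  d ^ (i - j - 1) * (i.choose (j + 1) : ℝ) - d ^ (i - j) * (i.choose j : ℝ)

noncomputable def Vsum (d : ℝ) (j k m : ℕ) : ℝ := ∑ i ∈ Finset.Icc k m, vterm d j i

noncomputable def gfun (d : ℝ) (j i : ℕ) : ℝ := d ^ (i - j) * (i.choose (j + 1) : ℝ)

lemma Icc_succ_left' (a b : ℕ) : Icc (a + 1) b = Ioc a b := by
  rw [← Finset.Icc_add_one_left_eq_Ioc]

lemma sum_Icc_head (f : ℕ → ℝ) {j m : ℕ} (h : j ≤ m) :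
    ∑ i ∈ Icc j m, f i = f j + ∑ i ∈ Icc (j + 1) m, f i := by
  rw [Finset.Icc_eq_cons_Ioc h, Finset.sum_cons, Icc_succ_left']

lemma cmono {j k : ℕ} (h : 2 * j + 2 ≤ k) : (k.choose j : ℝ) ≤ (k.choose (j + 1) : ℝ) := by
  exact_mod_cast Nat.choose_le_succ_of_lt_half_left (by omega : j < k / 2)

lemma cdesc {j k : ℕ} (h : k ≤ 2 * j + 3) : (k.choose (j + 2) : ℝ) ≤ (k.choose (j + 1) : ℝ) := by
  have h1 := Nat.choose_succ_right_eq k (j + 1)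
  have h2 : k - (j + 1) ≤ j + 2 := by omega
  have : k.choose (j + 2) * (j + 2) ≤ k.choose (j + 1) * (j + 2) :=
    h1 ▸ Nat.mul_le_mul_left _ h2
  exact_mod_cast Nat.le_of_mul_le_mul_right this (by omega)

lemma CF {d : ℝ} (j k : ℕ) (hjk : j ≤ k) :
    ∀ M, k ≤ M → d * Vsum d j k M =
      gfun d j k + d * ∑ i ∈ Icc k M, gfun d j i - gfun d j (M + 1) := by
  intro M hM
  induction M, hM using Nat.le_induction with
  | base =>
    simp only [Vsum, Icc_self, sum_singleton, vterm, gfun]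
    rcases eq_or_lt_of_le hjk with h | h
    · subst h
      have e0 : j - j = 0 := by omega
      have e1 : j + 1 - j = 1 := by omega
      rw [e0, e1, Nat.choose_succ_self, Nat.choose_self, Nat.choose_self]
      push_cast; ring
    · obtain ⟨e, he⟩ : ∃ e, k - j = e + 1 := ⟨k - j - 1, by omega⟩
      have h1 : k - j - 1 = e := by omega
      have h2 : k + 1 - j = e + 2 := by omega
      rw [h1, he, h2, Nat.choose_succ_succ' k j]
      push_cast; ring
  | succ M hM ih =>
    have hjM : j ≤ M := le_trans hjk hM
    have hs1 : Vsum d j k (M + 1) = Vsum d j k M + vterm d j (M + 1) := by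
      unfold Vsum; exact Finset.sum_Icc_succ_top (by omega) _
    have hs2 : ∑ i ∈ Icc k (M + 1), gfun d j i = (∑ i ∈ Icc k M, gfun d j i) + gfun d j (M + 1) :=
      Finset.sum_Icc_succ_top (by omega) _
    rw [hs1, hs2]
    have e1 : M + 1 - j - 1 = M - j := by omega
    have e2 : M + 1 - j = M - j + 1 := by omega
    have e3 : M + 1 + 1 - j = M - j + 2 := by omega
    have hv : vterm d j (M + 1) = d ^ (M - j) * ((M + 1).choose (j + 1) : ℝ)
        - d ^ (M - j + 1) * ((M + 1).choose j : ℝ) := by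
      unfold vterm; rw [e1, e2]
    have hg1 : gfun d j (M + 1) = d ^ (M - j + 1) * ((M + 1).choose (j + 1) : ℝ) := by
      unfold gfun; rw [e2]
    have hg2 : gfun d j (M + 1 + 1) = d ^ (M - j + 2) *
        (((M + 1).choose j : ℝ) + ((M + 1).choose (j + 1) : ℝ)) := by
      unfold gfun; rw [e3, Nat.choose_succ_succ' (M + 1) j]; push_cast; ring
    rw [mul_add, ih, hv, hg1, hg2, mul_add]
    ring

lemma hockey (j : ℕ) :
    ((2 * j + 3).choose (j + 1) : ℝ) = ∑ i ∈ Icc (j + 1) (2 * j + 2), (i.choose (j + 1) : ℝ) := by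
  have h1 : ∑ i ∈ Icc (j + 1) (2 * j + 2), i.choose (j + 1) = (2 * j + 3).choose (j + 2) :=
    Nat.sum_Icc_choose (2 * j + 2) (j + 1)
  have h2 : (2 * j + 3).choose (j + 2) = (2 * j + 3).choose (j + 1) := by
    have := Nat.choose_symm (show j + 1 ≤ 2 * j + 3 by omega)
    rwa [show 2 * j + 3 - (j + 1) = j + 2 from by omega] at this
  rw [← h2, ← h1]
  push_cast; rfl

lemma hockey2 (j k : ℕ) (hk : 1 ≤ k) :
    ∑ i ∈ Icc (j + 1) (k - 1), (i.choose (j + 1) : ℝ) = (k.choose (j + 2) : ℝ) := by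
  have h := Nat.sum_Icc_choose (k - 1) (j + 1)
  rw [show k - 1 + 1 = k from by omega] at h
  have : ((∑ i ∈ Icc (j + 1) (k - 1), i.choose (j + 1) : ℕ) : ℝ) = (k.choose (j + 1 + 1) : ℝ) := by
    exact_mod_cast congrArg (Nat.cast (R := ℝ)) h
  rw [← this]
  push_cast; rfl





lemma BI {d : ℝ} (hd0 : 0 < d) (hd1 : d < 1) (j k : ℕ) (hjk : j ≤ k) (hk : k ≤ 2 * j + 2) :
    gfun d j (2 * j + 2 + 1) < gfun d j k + d * ∑ i ∈ Icc k (2 * j + 2), gfun d j i := by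
  set M := 2 * j + 2 with hM
  -- LHS as a sum
  have hL : gfun d j (M + 1) = ∑ i ∈ Icc (j + 1) M, d ^ (j + 3) * (i.choose (j + 1) : ℝ) := by
    unfold gfun
    rw [show M + 1 - j = j + 3 from by omega, ← Finset.mul_sum, ← hockey j]
  -- termwise bound on Icc k M part
  have hterm : ∀ i ∈ Icc k M, d ^ (j + 3) * (i.choose (j + 1) : ℝ) ≤ d * gfun d j i := by
    intro i hi
    simp only [mem_Icc] at hi
    unfold gfun
    rw [← mul_assoc, ← pow_succ']
    refine mul_le_mul_of_nonneg_right ?_ (by positivity)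
    exact pow_le_pow_of_le_one hd0.le hd1.le (by omega)
  rcases eq_or_lt_of_le hjk with h | h
  · -- k = j
    subst h
    have hg0 : gfun d j j = 0 := by
      unfold gfun; rw [Nat.choose_succ_self]; simp
    have hsplit : ∑ i ∈ Icc j M, gfun d j i = ∑ i ∈ Icc (j + 1) M, gfun d j i := by
      rw [sum_Icc_head _ (by omega), hg0, zero_add]
    rw [hL, hg0, zero_add, hsplit, Finset.mul_sum]
    apply Finset.sum_lt_sum
    · intro i hi
      apply hterm
      simp only [mem_Icc] at hi ⊢; omega
    · refine ⟨j + 1, by simp [mem_Icc]; omega, ?_⟩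
      have : d * gfun d j (j + 1) = d ^ 2 * ((j + 1).choose (j + 1) : ℝ) := by
        unfold gfun
        rw [show j + 1 - j = 1 from by omega]; ring
      rw [this]
      have hp : d ^ (j + 3) < d ^ 2 := pow_lt_pow_right_of_lt_one₀ hd0 hd1 (by omega)
      have hc : ((j + 1).choose (j + 1) : ℝ) = 1 := by simp
      rw [hc]; simpa using hp
  · -- j < k
    have hk1 : 1 ≤ k := by omega
    -- split LHS at k-1
    have hsplitL : ∑ i ∈ Icc (j + 1) M, d ^ (j + 3) * (i.choose (j + 1) : ℝ)
        = (∑ i ∈ Icc (j + 1) (k - 1), d ^ (j + 3) * (i.choose (j + 1) : ℝ))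
          + ∑ i ∈ Icc k M, d ^ (j + 3) * (i.choose (j + 1) : ℝ) := by
      rw [Icc_succ_left' j M, Icc_succ_left' j (k - 1),
        show (Icc k M : Finset ℕ) = Ioc (k - 1) M from by rw [← Icc_succ_left']; congr 1; omega]
      exact (Finset.sum_Ioc_consecutive _ (by omega) (by omega)).symm
    have hA : ∑ i ∈ Icc (j + 1) (k - 1), d ^ (j + 3) * (i.choose (j + 1) : ℝ)
        = d ^ (j + 3) * (k.choose (j + 2) : ℝ) := by
      rw [← Finset.mul_sum, hockey2 j k hk1]
    have hAlt : d ^ (j + 3) * (k.choose (j + 2) : ℝ) < gfun d j k := by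
      have h1 : d ^ (j + 3) * (k.choose (j + 2) : ℝ) ≤ d ^ (j + 3) * (k.choose (j + 1) : ℝ) :=
        mul_le_mul_of_nonneg_left (cdesc (by omega)) (by positivity)
      have h2 : d ^ (j + 3) * (k.choose (j + 1) : ℝ) < d ^ (k - j) * (k.choose (j + 1) : ℝ) := by
        have hp : d ^ (j + 3) < d ^ (k - j) := pow_lt_pow_right_of_lt_one₀ hd0 hd1 (by omega)
        have hcp : (0 : ℝ) < (k.choose (j + 1) : ℝ) := by
          exact_mod_cast Nat.choose_pos (by omega : j + 1 ≤ k)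
        exact mul_lt_mul_of_pos_right hp hcp
      unfold gfun; linarith
    have hB : ∑ i ∈ Icc k M, d ^ (j + 3) * (i.choose (j + 1) : ℝ)
        ≤ d * ∑ i ∈ Icc k M, gfun d j i := by
      rw [Finset.mul_sum]; exact Finset.sum_le_sum hterm
    rw [hL, hsplitL, hA]
    linarith

lemma core {d : ℝ} (hd0 : 0 < d) (hd1 : d < 1) (j : ℕ) :
    ∀ m, 2 * j + 2 ≤ m → ∀ k, j ≤ k → k ≤ m → 0 < Vsum d j k m := by
  intro m hm
  induction m, hm using Nat.le_induction with
  | base =>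
    intro k hjk hk
    have hBI := BI hd0 hd1 j k hjk hk
    have hCF := CF (d := d) j k hjk (2 * j + 2) hk
    have : 0 < d * Vsum d j k (2 * j + 2) := by rw [hCF]; linarith
    nlinarith
  | succ m hm ih =>
    intro k hjk hk
    have hchoose : d * ((m + 1).choose j : ℝ) ≤ ((m + 1).choose (j + 1) : ℝ) := by
      have h1 : (0:ℝ) ≤ ((m + 1).choose j : ℝ) := by positivity
      have h2 : ((m + 1).choose j : ℝ) ≤ ((m + 1).choose (j + 1) : ℝ) := cmono (by omega)
      nlinarith
    have hvt : 0 ≤ vterm d j (m + 1) := by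
      unfold vterm
      rw [show m + 1 - j - 1 = m - j from by omega, show m + 1 - j = m - j + 1 from by omega,
        pow_succ]
      have : d ^ (m - j) * d * ((m + 1).choose j : ℝ)
          = d ^ (m - j) * (d * ((m + 1).choose j : ℝ)) := by ring
      rw [this]
      have := mul_le_mul_of_nonneg_left hchoose (le_of_lt (pow_pos hd0 (m - j)))
      linarith
    rcases eq_or_lt_of_le hk with hkm | hkm
    · -- k = m + 1 : single strict term
      rw [hkm]
      unfold Vsum
      rw [Icc_self, sum_singleton]
      unfold vterm
      rw [show m + 1 - j - 1 = m - j from by omega, show m + 1 - j = m - j + 1 from by omega,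
        pow_succ]
      have hcp : (0 : ℝ) < ((m + 1).choose j : ℝ) := by
        exact_mod_cast Nat.choose_pos (by omega : j ≤ m + 1)
      have h2 : ((m + 1).choose j : ℝ) ≤ ((m + 1).choose (j + 1) : ℝ) := cmono (by omega)
      have hpw : (0:ℝ) < d ^ (m - j) := pow_pos hd0 _
      have key : d * ((m + 1).choose j : ℝ) < ((m + 1).choose (j + 1) : ℝ) := by nlinarith
      have h4 := mul_lt_mul_of_pos_left key hpw
      nlinarith [h4]
    · have hk' : k ≤ m := by omega
      have hsum : Vsum d j k (m + 1) = Vsum d j k m + vterm d j (m + 1) := by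
        unfold Vsum; exact Finset.sum_Icc_succ_top (by omega) _
      have := ih k hjk hk'
      rw [hsum]; linarith



lemma mono2 {m : ℕ} {a : ℕ → ℝ} (hmono : ∀ i, i < m → a i ≤ a (i + 1)) :
    ∀ i k, i ≤ k → k ≤ m → a i ≤ a k := by
  intro i k hik hkm
  induction k with
  | zero =>
    have : i = 0 := by omega
    subst this; rfl
  | succ p ihp =>
    rcases Nat.lt_or_ge i (p + 1) with h | h
    · exact le_trans (ihp (by omega) (by omega)) (hmono p (by omega))
    · have : i = p + 1 := by omega
      subst this; rfl

lemma nonneg_of_cone {m : ℕ} {a : ℕ → ℝ} (ha0 : 0 ≤ a 0)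
    (hmono : ∀ i, i < m → a i ≤ a (i + 1)) : ∀ i, i ≤ m → 0 ≤ a i :=
  fun i hi => le_trans ha0 (mono2 hmono 0 i (Nat.zero_le _) hi)

/-- difference of consecutive shifted coefficients as a single sum -/
lemma diff_eq {d : ℝ} {m j : ℕ} (a : ℕ → ℝ) (hj : j ≤ m) :
    shiftCoeff a m d (j + 1) - shiftCoeff a m d j = ∑ i ∈ Icc j m, a i * vterm d j i := by
  have h1 : shiftCoeff a m d (j + 1) = ∑ i ∈ Icc j m, a i * (d ^ (i - j - 1) * (i.choose (j + 1) : ℝ)) := by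
    unfold shiftCoeff
    rw [sum_Icc_head (fun i => a i * (d ^ (i - j - 1) * (i.choose (j + 1) : ℝ))) hj,
      Nat.choose_succ_self]
    simp only [Nat.cast_zero, mul_zero, zero_add]
    apply Finset.sum_congr rfl
    intro i hi
    rw [Nat.sub_sub]
    ring
  have h2 : shiftCoeff a m d j = ∑ i ∈ Icc j m, a i * (d ^ (i - j) * (i.choose j : ℝ)) := by
    unfold shiftCoeff
    apply Finset.sum_congr rfl
    intro i hi; ring
  rw [h1, h2, ← Finset.sum_sub_distrib]
  apply Finset.sum_congr rfl
  intro i hi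
  unfold vterm; ring

lemma tele {j : ℕ} (a : ℕ → ℝ) :
    ∀ i, j ≤ i → a i = a j + ∑ k ∈ Ioc j i, (a k - a (k - 1)) := by
  intro i hi
  induction i, hi using Nat.le_induction with
  | base => simp
  | succ i hi ih =>
    rw [← Icc_succ_left', Finset.sum_Icc_succ_top (by omega), Icc_succ_left', ← add_assoc, ← ih]
    have : i + 1 - 1 = i := by omega
    rw [this]; ring

lemma abel_swap {d : ℝ} {m j : ℕ} (a : ℕ → ℝ) (hj : j ≤ m) :
    ∑ i ∈ Icc j m, a i * vterm d j i
      = a j * Vsum d j j m + ∑ k ∈ Ioc j m, (a k - a (k - 1)) * Vsum d j k m := by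
  have e1 : ∀ i ∈ Icc j m, a i * vterm d j i
      = a j * vterm d j i + ∑ k ∈ Ioc j m, (if k ≤ i then (a k - a (k - 1)) * vterm d j i else 0) := by
    intro i hi
    simp only [mem_Icc] at hi
    have hfilter : (Ioc j i : Finset ℕ) = (Ioc j m).filter (· ≤ i) := by
      ext x; simp only [mem_Ioc, mem_filter]
      constructor
      · intro h; exact ⟨⟨h.1, le_trans h.2 hi.2⟩, h.2⟩
      · intro h; exact ⟨h.1.1, h.2⟩
    calc a i * vterm d j i
        = (a j + ∑ k ∈ Ioc j i, (a k - a (k - 1))) * vterm d j i := by rw [← tele a i hi.1]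
      _ = a j * vterm d j i + ∑ k ∈ Ioc j i, (a k - a (k - 1)) * vterm d j i := by
          rw [add_mul, Finset.sum_mul]
      _ = _ := by rw [hfilter, Finset.sum_filter]
  rw [show (∑ i ∈ Icc j m, a i * vterm d j i)
      = ∑ i ∈ Icc j m, (a j * vterm d j i
          + ∑ k ∈ Ioc j m, (if k ≤ i then (a k - a (k - 1)) * vterm d j i else 0))
    from Finset.sum_congr rfl e1]
  rw [Finset.sum_add_distrib]
  congr 1
  · rw [← Finset.mul_sum]; rfl
  · rw [Finset.sum_comm]
    apply Finset.sum_congr rfl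
    intro k hk
    simp only [mem_Ioc] at hk
    have h1 : ∑ i ∈ Icc j m, (if k ≤ i then (a k - a (k - 1)) * vterm d j i else 0)
        = ∑ i ∈ (Icc j m).filter (k ≤ ·), (a k - a (k - 1)) * vterm d j i :=
      (Finset.sum_filter _ _).symm
    have h2 : (Icc j m).filter (k ≤ ·) = Icc k m := by
      ext x; simp only [mem_Icc, mem_filter]; omega
    rw [h1, h2, ← Finset.mul_sum]; rfl

/-- Piece 1: strictly increasing below `⌊m/2⌋`. -/
lemma inc_part {d : ℝ} (hd0 : 0 < d) (hd1 : d < 1) {m j : ℕ} (a : ℕ → ℝ)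
    (ha0 : 0 ≤ a 0) (hmono : ∀ i, i < m → a i ≤ a (i + 1)) (hmonic : a m = 1)
    (hj : 2 * j + 2 ≤ m) :
    shiftCoeff a m d j < shiftCoeff a m d (j + 1) := by
  have hjm : j ≤ m := by omega
  have hne : (Icc j m : Finset ℕ).Nonempty := ⟨j, by simp [mem_Icc]; omega⟩
  set ε := (Icc j m).inf' hne (fun k => Vsum d j k m) with hε
  have hεpos : 0 < ε := by
    rw [hε, Finset.lt_inf'_iff]
    intro k hk
    simp only [mem_Icc] at hk
    exact core hd0 hd1 j m hj k hk.1 hk.2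
  have hεle : ∀ k, j ≤ k → k ≤ m → ε ≤ Vsum d j k m := by
    intro k h1 h2
    exact Finset.inf'_le _ (by simp [mem_Icc]; exact ⟨h1, h2⟩)
  have key : shiftCoeff a m d (j + 1) - shiftCoeff a m d j
      ≥ (a j + ∑ k ∈ Ioc j m, (a k - a (k - 1))) * ε := by
    rw [diff_eq a hjm, abel_swap a hjm, add_mul, Finset.sum_mul]
    have t1 : a j * ε ≤ a j * Vsum d j j m :=
      mul_le_mul_of_nonneg_left (hεle j le_rfl hjm) (nonneg_of_cone ha0 hmono j hjm)
    have t2 : ∑ k ∈ Ioc j m, (a k - a (k - 1)) * ε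
        ≤ ∑ k ∈ Ioc j m, (a k - a (k - 1)) * Vsum d j k m := by
      apply Finset.sum_le_sum
      intro k hk
      simp only [mem_Ioc] at hk
      have hc : 0 ≤ a k - a (k - 1) := by
        have := hmono (k - 1) (by omega)
        rw [show k - 1 + 1 = k from by omega] at this
        linarith
      exact mul_le_mul_of_nonneg_left (hεle k (by omega) hk.2) hc
    linarith
  have hsum1 : a j + ∑ k ∈ Ioc j m, (a k - a (k - 1)) = 1 := by
    rw [← tele a m hjm, hmonic]
  rw [hsum1, one_mul] at key
  linarith


/-- Piece 2: strictly decreasing from `m̄` on. -/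
lemma dec_tail {d : ℝ} (hd0 : 0 < d) {m j : ℕ} (a : ℕ → ℝ)
    (hnn : ∀ i, i ≤ m → 0 ≤ a i) (hm1 : 0 < a (m - 1)) (hjm : j < m)
    (hd : (m : ℝ) - j ≤ d * (j + 1)) :
    shiftCoeff a m d (j + 1) < shiftCoeff a m d j := by
  have hjm' : j ≤ m := by omega
  have hdiff := diff_eq (d := d) (m := m) a hjm'
  -- show the sum is < 0, i.e. ∑ a i * vterm < 0
  have hsplit : ∑ i ∈ Icc j m, a i * vterm d j i
      = a j * vterm d j j + ∑ i ∈ Icc (j + 1) m, a i * vterm d j i :=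
    sum_Icc_head _ hjm'
  have hvjj : vterm d j j = -1 := by
    unfold vterm
    rw [Nat.sub_self, Nat.choose_succ_self, Nat.choose_self]
    simp
  -- each term in the tail is ≤ 0
  have hterm : ∀ i, j + 1 ≤ i → i ≤ m → a i * vterm d j i ≤ 0 := by
    intro i h1 h2
    have hbr : vterm d j i ≤ 0 := by
      unfold vterm
      obtain ⟨e, he⟩ : ∃ e, i - j = e + 1 := ⟨i - j - 1, by omega⟩
      rw [show i - j - 1 = e from by omega, he, pow_succ]
      have hcc := Nat.choose_succ_right_eq i j
      have hcast : (i.choose (j + 1) : ℝ) * (j + 1) = (i.choose j : ℝ) * ((i : ℝ) - j) := by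
        have := congrArg (Nat.cast (R := ℝ)) hcc
        push_cast at this
        rwa [Nat.cast_sub (by omega : j ≤ i)] at this
      have hij : ((i : ℝ) - j) ≤ d * (j + 1) := by
        have : (i : ℝ) ≤ m := by exact_mod_cast h2
        linarith
      have hcnn : (0:ℝ) ≤ (i.choose j : ℝ) := by positivity
      have hpw : (0:ℝ) < d ^ e := pow_pos hd0 e
      -- (j+1) * [C(i,j+1) - d*C(i,j)] = C(i,j)*((i-j) - d*(j+1)) ≤ 0
      have key : (i.choose (j + 1) : ℝ) ≤ d * (i.choose j : ℝ) := by
        nlinarith [mul_le_mul_of_nonneg_left hij hcnn]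
      nlinarith
    have := hnn i h2
    nlinarith [mul_le_mul_of_nonneg_left hbr (hnn i h2)]
  have htail : ∑ i ∈ Icc (j + 1) m, a i * vterm d j i ≤ 0 := by
    apply Finset.sum_nonpos
    intro i hi
    simp only [mem_Icc] at hi
    exact hterm i hi.1 hi.2
  -- strictness
  rcases Nat.lt_or_ge (j + 1) m with hcase | hcase
  ·
    have hsub : a (m - 1) * vterm d j (m - 1) < 0 := by
      have hbr : vterm d j (m - 1) < 0 := by
        unfold vterm
        obtain ⟨e, he⟩ : ∃ e, m - 1 - j = e + 1 := ⟨m - 1 - j - 1, by omega⟩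
        rw [show m - 1 - j - 1 = e from by omega, he, pow_succ]
        have hcc := Nat.choose_succ_right_eq (m - 1) j
        have hcast : ((m - 1).choose (j + 1) : ℝ) * (j + 1) = ((m - 1).choose j : ℝ) * (((m:ℝ) - 1) - j) := by
          have := congrArg (Nat.cast (R := ℝ)) hcc
          push_cast at this
          rw [Nat.cast_sub (by omega : j ≤ m - 1), Nat.cast_sub (by omega : 1 ≤ m)] at this
          exact_mod_cast this
        have hcpos : (0:ℝ) < ((m - 1).choose j : ℝ) := by
          exact_mod_cast Nat.choose_pos (by omega : j ≤ m - 1)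
        have hpw : (0:ℝ) < d ^ e := pow_pos hd0 e
        -- (j+1)*(C - d*C') = C'*((m-1-j) - d*(j+1)) ≤ C'*(-1) < 0
        have hij : ((m:ℝ) - 1 - j) + 1 ≤ d * (j + 1) := by linarith
        have key : ((m - 1).choose (j + 1) : ℝ) < d * ((m - 1).choose j : ℝ) := by
          nlinarith
        nlinarith
      nlinarith
    have hmem : m - 1 ∈ Icc (j + 1) m := by simp [mem_Icc]; omega
    have hrest : ∑ i ∈ (Icc (j + 1) m).erase (m - 1), a i * vterm d j i ≤ 0 := by
      apply Finset.sum_nonpos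
      intro i hi
      have hi' := Finset.mem_of_mem_erase hi
      simp only [mem_Icc] at hi'
      exact hterm i hi'.1 hi'.2
    have : ∑ i ∈ Icc (j + 1) m, a i * vterm d j i < 0 := by
      rw [← Finset.add_sum_erase _ _ hmem]
      linarith
    have haj : 0 ≤ a j := hnn j hjm'
    have : shiftCoeff a m d (j + 1) - shiftCoeff a m d j < 0 := by
      rw [hdiff, hsplit, hvjj]; nlinarith
    linarith
  · -- j + 1 = m : use the a j = a (m-1) term
    have hjeq : j = m - 1 := by omega
    have haj : 0 < a j := by rw [hjeq]; exact hm1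
    have : shiftCoeff a m d (j + 1) - shiftCoeff a m d j < 0 := by
      rw [hdiff, hsplit, hvjj]; nlinarith
    linarith

/-- Lemma 0 : for `m ≥ 2`, `b 0 < b 1`. -/
lemma zero_step {d : ℝ} (hd0 : 0 < d) (hd1 : d < 1) {m : ℕ} (hm : 2 ≤ m) (a : ℕ → ℝ)
    (ha0 : 0 ≤ a 0) (hmono : ∀ i, i < m → a i ≤ a (i + 1)) (hmonic : a m = 1) :
    shiftCoeff a m d 0 < shiftCoeff a m d 1 := by
  have hnn := nonneg_of_cone ha0 hmono
  have h0 : shiftCoeff a m d 0 = a 0 + ∑ i ∈ Icc 1 m, a i * d ^ i := by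
    unfold shiftCoeff
    rw [sum_Icc_head _ (by omega : 0 ≤ m)]
    simp only [Nat.sub_zero, Nat.choose_zero_right, Nat.cast_one, mul_one, pow_zero]
  have h1 : shiftCoeff a m d 1 = ∑ i ∈ Icc 1 m, a i * (d ^ (i - 1) * i) := by
    unfold shiftCoeff
    apply Finset.sum_congr rfl
    intro i hi
    rw [Nat.choose_one_right]
    ring
  have hdd : shiftCoeff a m d 1 - shiftCoeff a m d 0
      = -(a 0) + ∑ i ∈ Icc 1 m, a i * d ^ (i - 1) * ((i : ℝ) - d) := by
    rw [h0, h1]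
    have : ∑ i ∈ Icc 1 m, a i * (d ^ (i - 1) * i) - ∑ i ∈ Icc 1 m, a i * d ^ i
        = ∑ i ∈ Icc 1 m, a i * d ^ (i - 1) * ((i : ℝ) - d) := by
      rw [← Finset.sum_sub_distrib]
      apply Finset.sum_congr rfl
      intro i hi
      simp only [mem_Icc] at hi
      rw [show (i:ℕ) = i - 1 + 1 from by omega, pow_succ]
      rw [show i - 1 + 1 - 1 = i - 1 from by omega]
      push_cast [show i - 1 + 1 = i from by omega]
      ring
    linarith
  have hterm_nn : ∀ i ∈ Icc 1 m, 0 ≤ a i * d ^ (i - 1) * ((i : ℝ) - d) := by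
    intro i hi
    simp only [mem_Icc] at hi
    have h1i : (1:ℝ) ≤ (i:ℝ) := by exact_mod_cast hi.1
    have := hnn i hi.2
    have : (0:ℝ) ≤ d ^ (i - 1) := by positivity
    have : (0:ℝ) ≤ (i:ℝ) - d := by linarith
    positivity
  rcases Nat.lt_or_ge m 3 with hm2 | hm3
  · -- m = 2
    have hm2' : m = 2 := by omega
    subst hm2'
    have hicc : Icc 1 2 = ({1, 2} : Finset ℕ) := by decide
    rw [hicc, Finset.sum_insert (by decide), Finset.sum_singleton] at hdd
    have ha01 : a 0 ≤ a 1 := hmono 0 (by omega)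
    have ha02 : a 0 ≤ a 2 := le_trans ha01 (hmono 1 (by omega))
    have ha2 : a 2 = 1 := hmonic
    norm_num at hdd
    have ha0le1 : a 0 ≤ 1 := le_of_le_of_eq ha02 ha2
    have k1 : a 0 * (1 - d) ≤ a 1 * (1 - d) :=
      mul_le_mul_of_nonneg_right ha01 (by linarith)
    have k2 : a 0 * d ≤ 1 * d := mul_le_mul_of_nonneg_right ha0le1 hd0.le
    have k3 : d * d < d * 1 := by nlinarith
    rw [ha2] at hdd
    nlinarith [hdd, k1, k2, k3]
  · -- m ≥ 3
    have hsplit : ∑ i ∈ Icc 1 m, a i * d ^ (i - 1) * ((i : ℝ) - d)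
        = a 1 * d ^ 0 * ((1:ℝ) - d) + (a 2 * d ^ 1 * ((2:ℝ) - d)
          + ∑ i ∈ Icc 3 m, a i * d ^ (i - 1) * ((i : ℝ) - d)) := by
      rw [sum_Icc_head _ (by omega : 1 ≤ m), sum_Icc_head _ (by omega : 2 ≤ m)]
      norm_num
    have htail : a m * d ^ (m - 1) * ((m : ℝ) - d)
        ≤ ∑ i ∈ Icc 3 m, a i * d ^ (i - 1) * ((i : ℝ) - d) := by
      apply Finset.single_le_sum (f := fun i => a i * d ^ (i - 1) * ((i : ℝ) - d))
      · intro i hi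
        apply hterm_nn
        simp only [mem_Icc] at hi ⊢; omega
      · simp [mem_Icc]; omega
    have ha01 : a 0 ≤ a 1 := hmono 0 (by omega)
    have ha12 : a 1 ≤ a 2 := hmono 1 (by omega)
    have ha0m : a 0 ≤ a m := mono2 hmono 0 m (by omega) le_rfl
    have hmr : (3:ℝ) ≤ (m:ℝ) := by exact_mod_cast hm3
    have hpw : (0:ℝ) < d ^ (m - 1) := pow_pos hd0 _
    rw [hsplit] at hdd
    rw [hmonic] at ha0m htail
    norm_num at hdd htail
    have k1 : a 0 * (1 - d) ≤ a 1 * (1 - d) :=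
      mul_le_mul_of_nonneg_right ha01 (by linarith)
    have ha02 : a 0 ≤ a 2 := le_trans ha01 ha12
    have k2 : a 0 * (d * (2 - d)) ≤ a 2 * (d * (2 - d)) := by
      apply mul_le_mul_of_nonneg_right ha02
      nlinarith
    have k3 : 0 ≤ a 0 * (d - d * d) := by
      apply mul_nonneg ha0
      nlinarith
    have k4 : 0 < d ^ (m - 1) * ((m:ℝ) - d) := by
      apply mul_pos hpw
      linarith
    nlinarith [hdd, htail, k1, k2, k3, k4]


lemma shiftCoeff_top (x : ℕ → ℝ) (n : ℕ) (d : ℝ) : shiftCoeff x n d n = x n := by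
  unfold shiftCoeff
  rw [Icc_self, sum_singleton, Nat.sub_self, Nat.choose_self]
  simp

lemma shiftCoeff_empty (x : ℕ → ℝ) (n : ℕ) (d : ℝ) : shiftCoeff x n d (n + 1) = 0 := by
  unfold shiftCoeff
  rw [Finset.Icc_eq_empty (by omega), sum_empty]

/-- Key identity : `b (j+1) = r j + d * r (j+1)` where `r` comes from `P = x·R + a₀`. -/
lemma key_id {d : ℝ} (n : ℕ) (a : ℕ → ℝ) {j : ℕ} (hj : j ≤ n) :
    shiftCoeff a (n + 1) d (j + 1)
      = shiftCoeff (fun i => a (i + 1)) n d j + d * shiftCoeff (fun i => a (i + 1)) n d (j + 1) := by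
  unfold shiftCoeff
  have hmap : (Icc (j + 1) (n + 1) : Finset ℕ) = (Icc j n).map (addRightEmbedding 1) := by
    rw [Finset.map_add_right_Icc]
  rw [hmap, Finset.sum_map]
  have hterm : ∀ i ∈ Icc j n,
      a (addRightEmbedding 1 i) * d ^ (addRightEmbedding 1 i - (j + 1)) *
        ((addRightEmbedding 1 i).choose (j + 1) : ℝ)
      = a (i + 1) * d ^ (i - j) * (i.choose j : ℝ)
        + a (i + 1) * d ^ (i - j) * (i.choose (j + 1) : ℝ) := by
    intro i hi
    simp only [addRightEmbedding_apply]
    rw [Nat.succ_sub_succ, Nat.choose_succ_succ' i j]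
    push_cast
    ring
  rw [Finset.sum_congr rfl hterm, Finset.sum_add_distrib]
  congr 1
  -- second part : ∑_{Icc j n} a(i+1) d^{i-j} C(i,j+1) = d * ∑_{Icc (j+1) n} ...
  have hzero : a (j + 1) * d ^ (j - j) * ((j.choose (j + 1)) : ℝ) = 0 := by
    rw [Nat.choose_succ_self]; simp
  rw [sum_Icc_head (fun i => a (i + 1) * d ^ (i - j) * (i.choose (j + 1) : ℝ)) hj, hzero, zero_add,
    Finset.mul_sum]
  apply Finset.sum_congr rfl
  intro i hi
  simp only [mem_Icc] at hi
  rw [show i - j = (i - (j + 1)) + 1 from by omega, pow_succ]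
  ring

/-- Once-crossing / unimodality of the shifted coefficient sequence. -/
lemma once_crossing {d : ℝ} (hd0 : 0 < d) (hd1 : d < 1) :
    ∀ m, ∀ a : ℕ → ℝ, 0 ≤ a 0 → (∀ i, i < m → a i ≤ a (i + 1)) → a m = 1 →
      ∃ t, t ≤ m ∧ (∀ j, j < t → shiftCoeff a m d j < shiftCoeff a m d (j + 1))
        ∧ (∀ j, t ≤ j → j < m → shiftCoeff a m d (j + 1) ≤ shiftCoeff a m d j) := by
  intro m
  induction m with
  | zero =>
    intro a _ _ _
    exact ⟨0, le_rfl, fun j hj => absurd hj (by omega), fun j _ hj => absurd hj (by omega)⟩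
  | succ n ih =>
    intro a ha0 hmono hmonic
    set r : ℕ → ℝ := fun j => shiftCoeff (fun i => a (i + 1)) n d j with hr
    have hkey : ∀ j, j ≤ n → shiftCoeff a (n + 1) d (j + 1) = r j + d * r (j + 1) :=
      fun j hj => key_id n a hj
    have hDj : ∀ j, 1 ≤ j → j ≤ n →
        shiftCoeff a (n + 1) d j - shiftCoeff a (n + 1) d (j + 1)
          = (r (j - 1) - r j) + d * (r j - r (j + 1)) := by
      intro j h1 h2
      have e1 := hkey (j - 1) (by omega)
      rw [show j - 1 + 1 = j from by omega] at e1
      have e2 := hkey j h2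
      rw [e1, e2]; ring
    rcases Nat.eq_zero_or_pos n with hn0 | hn1
    · -- m = 1
      subst hn0
      by_cases h : shiftCoeff a 1 d 1 ≤ shiftCoeff a 1 d 0
      · exact ⟨0, by omega, fun j hj => absurd hj (by omega),
          fun j hj hj1 => by
            have : j = 0 := by omega
            subst this; exact h⟩
      · push_neg at h
        exact ⟨1, le_rfl, fun j hj => by
            have : j = 0 := by omega
            subst this; exact h,
          fun j hj hj1 => absurd (lt_of_le_of_lt hj hj1) (by omega)⟩
    · -- m = n + 1 ≥ 2
      have h0 : shiftCoeff a (n + 1) d 0 < shiftCoeff a (n + 1) d 1 :=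
        zero_step hd0 hd1 (by omega) a ha0 hmono hmonic
      obtain ⟨s, hs, hs1, hs2⟩ := ih (fun i => a (i + 1))
        (le_trans ha0 (hmono 0 (by omega)))
        (fun i hi => hmono (i + 1) (by omega))
        (hmonic)
      have hs2' : ∀ j, s ≤ j → j ≤ n → r (j + 1) ≤ r j := by
        intro j h1 h2
        rcases Nat.lt_or_ge j n with h | h
        · exact hs2 j h1 h
        · have hjn : j = n := by omega
          rw [hjn]
          have hrn1 : r (n + 1) = 0 := shiftCoeff_empty _ n d
          have hrn : r n = 1 := by
            show shiftCoeff (fun i => a (i + 1)) n d n = 1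
            rw [shiftCoeff_top]; exact hmonic
          rw [hrn1, hrn]; norm_num
      have hneg : ∀ j, 1 ≤ j → j < s →
          shiftCoeff a (n + 1) d j < shiftCoeff a (n + 1) d (j + 1) := by
        intro j h1 h2
        have hd1' := hDj j h1 (by omega)
        have n1 : r (j - 1) < r j := by
          have := hs1 (j - 1) (by omega)
          rwa [show j - 1 + 1 = j from by omega] at this
        have n2 : r j < r (j + 1) := hs1 j h2
        nlinarith [hd1']
      have hpos : ∀ j, s + 1 ≤ j → j ≤ n →
          shiftCoeff a (n + 1) d (j + 1) ≤ shiftCoeff a (n + 1) d j := by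
        intro j h1 h2
        have hd1' := hDj j (by omega) h2
        have p1 : r j ≤ r (j - 1) := by
          have := hs2' (j - 1) (by omega) (by omega)
          rwa [show j - 1 + 1 = j from by omega] at this
        have p2 : r (j + 1) ≤ r j := hs2' j (by omega) h2
        nlinarith [hd1']
      rcases Nat.eq_zero_or_pos s with hsz | hspos
      · -- s = 0 : take t = 1
        refine ⟨1, by omega, ?_, ?_⟩
        · intro j hj
          have : j = 0 := by omega
          subst this; exact h0
        · intro j hj hjn
          rcases Nat.eq_or_lt_of_le hj with h | h
          · -- j = 1 : s + 1 = 1 ≤ j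
            exact hpos j (by omega) (by omega)
          · exact hpos j (by omega) (by omega)
      · -- s ≥ 1
        by_cases hC : shiftCoeff a (n + 1) d (s + 1) ≤ shiftCoeff a (n + 1) d s
        · refine ⟨s, by omega, ?_, ?_⟩
          · intro j hj
            rcases Nat.eq_zero_or_pos j with hj0 | hj1
            · subst hj0; exact h0
            · exact hneg j hj1 hj
          · intro j hj hjn
            rcases Nat.eq_or_lt_of_le hj with h | h
            · subst h; exact hC
            · exact hpos j (by omega) (by omega)
        · push_neg at hC
          refine ⟨s + 1, by omega, ?_, ?_⟩
          · intro j hj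
            rcases Nat.eq_zero_or_pos j with hj0 | hj1
            · subst hj0; exact h0
            · rcases Nat.lt_or_ge j s with h | h
              · exact hneg j hj1 h
              · have : j = s := by omega
                subst this; exact hC
          · intro j hj hjn
            exact hpos j hj (by omega)


end Stmt19

open Stmt19

/-- Theorem 4.2.  Let `0 < d < 1` and `P ∈ 𝐏^m_↑` with
`P(x) ≠ x^m`.  Then `P(x+d)` has a mode, and every mode `t` of `P(x+d)` satisfies
`⌊m/2⌋ ≤ t ≤ m̄ = ⌈(m−d)/(d+1)⌉`. -/
theorem stmt_19 (m : ℕ) (hm : 0 < m) (d : ℝ) (hd0 : 0 < d) (hd1 : d < 1)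
    (a : ℕ → ℝ) (ha0 : 0 ≤ a 0) (hmono : ∀ i, i < m → a i ≤ a (i + 1))
    (hmonic : a m = 1) (hne : ∃ i, i < m ∧ a i ≠ 0) :
    (∃ t, IsMode (shiftCoeff a m d) m t) ∧
      ∀ t, IsMode (shiftCoeff a m d) m t → m / 2 ≤ t ∧ t ≤ mbar m d := by
  have hnn := nonneg_of_cone ha0 hmono
  obtain ⟨i0, hi0m, hi0ne⟩ := hne
  have ham1 : 0 < a (m - 1) := by
    have h1 : 0 < a i0 := lt_of_le_of_ne (hnn i0 (by omega)) (Ne.symm hi0ne)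
    exact lt_of_lt_of_le h1 (mono2 hmono i0 (m - 1) (by omega) (by omega))
  obtain ⟨t0, ht0m, ht0a, ht0b⟩ := once_crossing hd0 hd1 m a ha0 hmono hmonic
  constructor
  · exact ⟨t0, ht0m, fun i hi => (ht0a i hi).le, ht0b⟩
  · intro t ht
    obtain ⟨htm, hta, htb⟩ := ht
    constructor
    · by_contra hlt
      push_neg at hlt
      have h2 : 2 * t + 2 ≤ m := by omega
      have hinc := inc_part hd0 hd1 a ha0 hmono hmonic h2
      have hdec := htb t le_rfl (by omega)
      linarith
    · by_contra hlt
      push_neg at hlt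
      set q := mbar m d with hq
      have hqm : q < m := by omega
      have h1 : ((m : ℝ) - d) / (d + 1) ≤ (q : ℝ) := by
        rw [hq]
        unfold mbar
        have h2 := Int.le_ceil (((m : ℝ) - d) / (d + 1))
        have h3 : ((⌈((m : ℝ) - d) / (d + 1)⌉ : ℤ) : ℝ)
            ≤ ((⌈((m : ℝ) - d) / (d + 1)⌉.toNat : ℕ) : ℝ) := by
          exact_mod_cast Int.self_le_toNat _
        linarith
      have hreal : ((m : ℝ) - (q : ℝ)) ≤ d * ((q : ℝ) + 1) := by
        have hd1p : (0 : ℝ) < d + 1 := by linarith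
        rw [div_le_iff₀ hd1p] at h1
        nlinarith
      have hdec := dec_tail hd0 a hnn ham1 hqm hreal
      have hinc := hta q hlt
      linarith
end
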